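/- In the rational function field $k(v_1, v_2)$ over a field $k$, let $c$ be the $k$-automorphism of order 3 with $c(v_1) = 1/v_2$ and $c(v_2) = v_1/v_2$. Then the elements $X_1 = (v_1^3v_2^3 + v_1^3 + v_2^3 - 3v_1^2v_2^2)/(v_1^4v_2^2 + v_2^4 + v_1^2 - v_1^2v_2^3 - v_1v_2^2 - v_1^3v_2)$ and $X_2 = (v_1v_2^4 + v_1v_2 + v_1^4v_2 - 3v_1^2v_2^2)/(v_1^4v_2^2 + v_2^4 + v_1^2 - v_1^2v_2^3 - v_1v_2^2 - v_1^3v_2)$ are fixed by $c$, and $k(v_1, v_2)^{\langle c \rangle} = k(X_1, X_2)$. -/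

import Mathlib

/-!
The substitution `(v₁, v₂) ↦ (1/v₂, v₁/v₂)` multiplies the two numerators and the common
denominator of `X₁, X₂` by `v₂⁻⁶`, so `X₁` and `X₂` are `c`-invariant. Put `E = k(X₁, X₂)`.
The orbit `v₁, 1/v₂, v₂/v₁` of `v₁` consists of the roots of
`X₁X₂ T³ - (X₁³ + X₂³ + 1) T² + ((X₁² - X₁X₂ + X₂²)² + X₁ + X₂) T - X₁X₂ ∈ E[T]`,
and `v₂ = (X₁ - v₁) / (X₁² - X₁X₂ + X₂² - X₂v₁)`. Hence `k(v₁, v₂) = E(v₁)` has degree at most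
`3 = |⟨c⟩|` over `E ⊆ k(v₁, v₂)^⟨c⟩`, and Artin's theorem forces `E = k(v₁, v₂)^⟨c⟩`.
-/

namespace IntermediateField

theorem mem_fixedField_zpowers_iff {k K : Type*} [Field k] [Field K] [Algebra k K]
    {c : K ≃ₐ[k] K} {x : K} : x ∈ fixedField (Subgroup.zpowers c) ↔ c x = x :=
  ⟨fun h => h ⟨c, Subgroup.mem_zpowers c⟩, fun h g =>
    (Subgroup.zpowers_le (H := MulAction.stabilizer (K ≃ₐ[k] K) x)).mpr h g.2⟩

open Polynomial in
theorem eq_fixedField_of_adjoin_simple_eq_top {k K : Type*} [Field k] [Field K] [Algebra k K]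
    {H : Subgroup (K ≃ₐ[k] K)} [Finite H] {E : IntermediateField k K} (hE : E ≤ fixedField H)
    {x : K} (hx : E⟮x⟯ = ⊤) {p : E[X]} (hp : p ≠ 0) (hpx : aeval x p = 0)
    (hdeg : p.natDegree ≤ Nat.card H) : E = fixedField H := by
  have hint : IsIntegral E x := isAlgebraic_iff_isIntegral.1 ⟨p, hp, hpx⟩
  have : FiniteDimensional E K := by
    have := adjoin.finiteDimensional hint
    rw [hx] at this
    exact topEquiv.toLinearEquiv.finiteDimensional
  have hfix : Module.finrank (fixedField H) K = Nat.card H := by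
    have := Fintype.ofFinite H
    rw [Nat.card_eq_fintype_card]
    exact FixedPoints.finrank_eq_card H K
  refine eq_of_le_of_finrank_le' hE ?_
  rw [hfix, ← finrank_top', ← hx, adjoin.finrank hint]
  exact (natDegree_le_natDegree (minpoly.degree_le_of_ne_zero E x hp hpx)).trans hdeg

theorem eq_top_of_algebraMap_X_mem {σ k : Type*} [Field k]
    (F : IntermediateField k (FractionRing (MvPolynomial σ k)))
    (h : ∀ i, algebraMap (MvPolynomial σ k) _ (MvPolynomial.X i) ∈ F) : F = ⊤ := by
  have hpoly : ∀ p, algebraMap (MvPolynomial σ k) (FractionRing (MvPolynomial σ k)) p ∈ F := by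
    have : Algebra.adjoin k (Set.range MvPolynomial.X) ≤
        F.toSubalgebra.comap (IsScalarTower.toAlgHom k (MvPolynomial σ k) _) :=
      Algebra.adjoin_le (Set.range_subset_iff.2 h)
    rw [MvPolynomial.adjoin_range_X] at this
    exact fun p => this trivial
  refine eq_top_iff.2 fun x _ => ?_
  obtain ⟨p, q, -, rfl⟩ := IsFractionRing.div_surjective (A := MvPolynomial σ k) x
  exact div_mem (hpoly p) (hpoly q)

end IntermediateField

namespace Masuda

section CommRing

variable {R S : Type*} [CommRing R] [CommRing S]

def num₁ (a b : R) : R := a ^ 3 * b ^ 3 + a ^ 3 + b ^ 3 - 3 * (a ^ 2 * b ^ 2)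

def num₂ (a b : R) : R := a * b ^ 4 + a * b + a ^ 4 * b - 3 * (a ^ 2 * b ^ 2)

def den (a b : R) : R := a ^ 4 * b ^ 2 + b ^ 4 + a ^ 2 - a ^ 2 * b ^ 3 - a * b ^ 2 - a ^ 3 * b

variable {F : Type*} [FunLike F R S] [RingHomClass F R S] (f : F) (a b : R)

theorem map_num₁ : f (num₁ a b) = num₁ (f a) (f b) := by simp [num₁, map_ofNat]

theorem map_num₂ : f (num₂ a b) = num₂ (f a) (f b) := by simp [num₂, map_ofNat]

theorem map_den : f (den a b) = den (f a) (f b) := by simp [den]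

open Polynomial in
noncomputable def cubic (x y : R) : R[X] :=
  C (x * y) * X ^ 3 - C (x ^ 3 + y ^ 3 + 1) * X ^ 2
    + C ((x ^ 2 - x * y + y ^ 2) ^ 2 + x + y) * X - C (x * y)

theorem natDegree_cubic_le (x y : R) : (cubic x y).natDegree ≤ 3 := by
  unfold cubic; compute_degree

theorem cubic_ne_zero [NoZeroDivisors R] {x y : R} (hx : x ≠ 0) (hy : y ≠ 0) :
    cubic x y ≠ 0 := by
  intro h
  have := congrArg (Polynomial.coeff · 0) h
  simp [cubic, Polynomial.coeff_X, hx, hy] at this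

end CommRing

section Field

variable {K : Type*} [Field K] {a b : K}

def X₁ (a b : K) : K := num₁ a b / den a b

def X₂ (a b : K) : K := num₂ a b / den a b

theorem map_X₁ {L F : Type*} [Field L] [FunLike F K L] [RingHomClass F K L] (f : F) (a b : K) :
    f (X₁ a b) = X₁ (f a) (f b) := by
  rw [X₁, X₁, map_div₀, map_num₁, map_den]

theorem map_X₂ {L F : Type*} [Field L] [FunLike F K L] [RingHomClass F K L] (f : F) (a b : K) :
    f (X₂ a b) = X₂ (f a) (f b) := by
  rw [X₂, X₂, map_div₀, map_num₂, map_den]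

theorem num₁_one_div_div (hb : b ≠ 0) : num₁ (1 / b) (a / b) = num₁ a b / b ^ 6 := by
  unfold num₁; field_simp; ring

theorem num₂_one_div_div (hb : b ≠ 0) : num₂ (1 / b) (a / b) = num₂ a b / b ^ 6 := by
  unfold num₂; field_simp; ring

theorem den_one_div_div (hb : b ≠ 0) : den (1 / b) (a / b) = den a b / b ^ 6 := by
  unfold den; field_simp; ring

theorem X₁_one_div_div (hb : b ≠ 0) : X₁ (1 / b) (a / b) = X₁ a b := by
  rw [X₁, X₁, num₁_one_div_div hb, den_one_div_div hb,
    div_div_div_cancel_right₀ (pow_ne_zero 6 hb)]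

theorem X₂_one_div_div (hb : b ≠ 0) : X₂ (1 / b) (a / b) = X₂ a b := by
  rw [X₂, X₂, num₂_one_div_div hb, den_one_div_div hb,
    div_div_div_cancel_right₀ (pow_ne_zero 6 hb)]

theorem eval_cubic_X₁_X₂ (hD : den a b ≠ 0) : (cubic (X₁ a b) (X₂ a b)).eval a = 0 := by
  simp only [cubic, Polynomial.eval_sub, Polynomial.eval_add, Polynomial.eval_mul,
    Polynomial.eval_C, Polynomial.eval_pow, Polynomial.eval_X]
  unfold X₁ X₂ num₁ num₂
  field_simp
  unfold den
  ring

theorem eq_div_of_X₁_ne (hD : den a b ≠ 0) (ha : X₁ a b ≠ a) :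
    b = (X₁ a b - a) / (X₁ a b ^ 2 - X₁ a b * X₂ a b + X₂ a b ^ 2 - X₂ a b * a) := by
  have h : b * (X₁ a b ^ 2 - X₁ a b * X₂ a b + X₂ a b ^ 2 - X₂ a b * a) = X₁ a b - a := by
    unfold X₁ X₂ num₁ num₂
    field_simp
    unfold den
    ring
  rw [eq_div_iff fun h0 => ha (by rw [h0, mul_zero] at h; exact sub_eq_zero.1 h.symm)]
  exact h

theorem map_X₁_eq_self {F : Type*} [FunLike F K K] [RingHomClass F K K] {f : F}
    (hb : b ≠ 0) (ha : f a = 1 / b) (hb' : f b = a / b) : f (X₁ a b) = X₁ a b := by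
  rw [map_X₁, ha, hb', X₁_one_div_div hb]

theorem map_X₂_eq_self {F : Type*} [FunLike F K K] [RingHomClass F K K] {f : F}
    (hb : b ≠ 0) (ha : f a = 1 / b) (hb' : f b = a / b) : f (X₂ a b) = X₂ a b := by
  rw [map_X₂, ha, hb', X₂_one_div_div hb]

end Field

section RationalFunctionField

open MvPolynomial

variable {k : Type*} [Field k] {v₁ v₂ : FractionRing (MvPolynomial (Fin 2) k)}

theorem algebraMap_ne_zero_of_aeval_ne_zero {σ : Type*} {p : MvPolynomial σ k}
    (f : σ → Polynomial k) (h : aeval f p ≠ 0) :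
    algebraMap (MvPolynomial σ k) (FractionRing (MvPolynomial σ k)) p ≠ 0 :=
  (map_ne_zero_iff _ (IsFractionRing.injective _ _)).2 (ne_zero_of_map h)

theorem num₁_ne_zero (h1 : v₁ = algebraMap (MvPolynomial (Fin 2) k) _ (X 0))
    (h2 : v₂ = algebraMap (MvPolynomial (Fin 2) k) _ (X 1)) : num₁ v₁ v₂ ≠ 0 := by
  have h : (num₁ (Polynomial.X : Polynomial k) Polynomial.X).natDegree = 6 := by
    unfold num₁; compute_degree!
  rw [h1, h2, ← map_num₁]
  refine algebraMap_ne_zero_of_aeval_ne_zero (fun _ => Polynomial.X) ?_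
  rw [map_num₁, aeval_X, aeval_X]
  exact Polynomial.ne_zero_of_natDegree_gt (n := 0) (by omega)

theorem num₂_ne_zero (h1 : v₁ = algebraMap (MvPolynomial (Fin 2) k) _ (X 0))
    (h2 : v₂ = algebraMap (MvPolynomial (Fin 2) k) _ (X 1)) : num₂ v₁ v₂ ≠ 0 := by
  -- substituting `T` for both variables would leave the leading coefficient `2`
  have h : (num₂ (Polynomial.X ^ 2 : Polynomial k) Polynomial.X).natDegree = 9 := by
    unfold num₂; compute_degree!
  rw [h1, h2, ← map_num₂]
  refine algebraMap_ne_zero_of_aeval_ne_zero ![Polynomial.X ^ 2, Polynomial.X] ?_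
  rw [map_num₂, aeval_X, aeval_X]
  exact Polynomial.ne_zero_of_natDegree_gt (n := 0) (by simp [h])

theorem den_ne_zero (h1 : v₁ = algebraMap (MvPolynomial (Fin 2) k) _ (X 0))
    (h2 : v₂ = algebraMap (MvPolynomial (Fin 2) k) _ (X 1)) : den v₁ v₂ ≠ 0 := by
  have h : (den (Polynomial.X : Polynomial k) Polynomial.X).natDegree = 6 := by
    unfold den; compute_degree!
  rw [h1, h2, ← map_den]
  refine algebraMap_ne_zero_of_aeval_ne_zero (fun _ => Polynomial.X) ?_
  rw [map_den, aeval_X, aeval_X]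
  exact Polynomial.ne_zero_of_natDegree_gt (n := 0) (by omega)

theorem X₁_ne_left (h1 : v₁ = algebraMap (MvPolynomial (Fin 2) k) _ (X 0))
    (h2 : v₂ = algebraMap (MvPolynomial (Fin 2) k) _ (X 1)) : X₁ v₁ v₂ ≠ v₁ := by
  have h : (num₁ (Polynomial.X : Polynomial k) Polynomial.X
      - Polynomial.X * den Polynomial.X Polynomial.X).natDegree = 7 := by
    unfold num₁ den; compute_degree!
  rw [X₁, Ne, div_eq_iff (den_ne_zero h1 h2), ← sub_eq_zero, h1, h2, ← map_num₁, ← map_den,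
    ← map_mul, ← map_sub]
  refine algebraMap_ne_zero_of_aeval_ne_zero (fun _ => Polynomial.X) ?_
  rw [map_sub, map_mul, map_num₁, map_den, aeval_X, aeval_X]
  exact Polynomial.ne_zero_of_natDegree_gt (n := 0) (by omega)

open IntermediateField in
theorem adjoin_X₁_X₂_adjoin_simple_eq_top
    (h1 : v₁ = algebraMap (MvPolynomial (Fin 2) k) _ (X 0))
    (h2 : v₂ = algebraMap (MvPolynomial (Fin 2) k) _ (X 1)) :
    (adjoin k {X₁ v₁ v₂, X₂ v₁ v₂})⟮v₁⟯ = ⊤ := by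
  set E := adjoin k {X₁ v₁ v₂, X₂ v₁ v₂}
  have hx : X₁ v₁ v₂ ∈ E⟮v₁⟯ :=
    IntermediateField.algebraMap_mem _ (⟨_, subset_adjoin k _ (Set.mem_insert _ _)⟩ : E)
  have hy : X₂ v₁ v₂ ∈ E⟮v₁⟯ :=
    IntermediateField.algebraMap_mem _
      (⟨_, subset_adjoin k _ (Set.mem_insert_of_mem _ rfl)⟩ : E)
  have hv₁ := mem_adjoin_simple_self E v₁
  have hv₂ : v₂ ∈ E⟮v₁⟯ := by
    have hD := den_ne_zero h1 h2
    rw [eq_div_of_X₁_ne hD (X₁_ne_left h1 h2)]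
    exact div_mem (sub_mem hx hv₁) (sub_mem (add_mem (sub_mem (pow_mem hx 2)
      (mul_mem hx hy)) (pow_mem hy 2)) (mul_mem hy hv₁))
  refine restrictScalars_injective k (eq_top_of_algebraMap_X_mem _ fun i => ?_)
  fin_cases i
  · exact h1 ▸ hv₁
  · exact h2 ▸ hv₂

end RationalFunctionField

end Masuda

open Masuda IntermediateField

/-- In `k(v₁,v₂)`, let `c` be the `k`-automorphism of order 3 with `c(v₁)=1/v₂`,
`c(v₂)=v₁/v₂`. Then `X₁, X₂` below are fixed by `c` and `k(v₁,v₂)^⟨c⟩ = k(X₁,X₂)`. -/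
theorem stmt_11 {k : Type*} [Field k]
    (v₁ v₂ : FractionRing (MvPolynomial (Fin 2) k))
    (h1 : v₁ = algebraMap (MvPolynomial (Fin 2) k) (FractionRing (MvPolynomial (Fin 2) k))
      (MvPolynomial.X 0))
    (h2 : v₂ = algebraMap (MvPolynomial (Fin 2) k) (FractionRing (MvPolynomial (Fin 2) k))
      (MvPolynomial.X 1))
    (c : FractionRing (MvPolynomial (Fin 2) k) ≃ₐ[k] FractionRing (MvPolynomial (Fin 2) k))
    (hc1 : c v₁ = 1 / v₂) (hc2 : c v₂ = v₁ / v₂) (hord : orderOf c = 3) :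
    c ((v₁ ^ 3 * v₂ ^ 3 + v₁ ^ 3 + v₂ ^ 3 - 3 * (v₁ ^ 2 * v₂ ^ 2)) /
        (v₁ ^ 4 * v₂ ^ 2 + v₂ ^ 4 + v₁ ^ 2 - v₁ ^ 2 * v₂ ^ 3 - v₁ * v₂ ^ 2 - v₁ ^ 3 * v₂)) =
      (v₁ ^ 3 * v₂ ^ 3 + v₁ ^ 3 + v₂ ^ 3 - 3 * (v₁ ^ 2 * v₂ ^ 2)) /
        (v₁ ^ 4 * v₂ ^ 2 + v₂ ^ 4 + v₁ ^ 2 - v₁ ^ 2 * v₂ ^ 3 - v₁ * v₂ ^ 2 - v₁ ^ 3 * v₂) ∧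
    c ((v₁ * v₂ ^ 4 + v₁ * v₂ + v₁ ^ 4 * v₂ - 3 * (v₁ ^ 2 * v₂ ^ 2)) /
        (v₁ ^ 4 * v₂ ^ 2 + v₂ ^ 4 + v₁ ^ 2 - v₁ ^ 2 * v₂ ^ 3 - v₁ * v₂ ^ 2 - v₁ ^ 3 * v₂)) =
      (v₁ * v₂ ^ 4 + v₁ * v₂ + v₁ ^ 4 * v₂ - 3 * (v₁ ^ 2 * v₂ ^ 2)) /
        (v₁ ^ 4 * v₂ ^ 2 + v₂ ^ 4 + v₁ ^ 2 - v₁ ^ 2 * v₂ ^ 3 - v₁ * v₂ ^ 2 - v₁ ^ 3 * v₂) ∧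
    IntermediateField.fixedField (Subgroup.zpowers c) =
      IntermediateField.adjoin k
        {(v₁ ^ 3 * v₂ ^ 3 + v₁ ^ 3 + v₂ ^ 3 - 3 * (v₁ ^ 2 * v₂ ^ 2)) /
           (v₁ ^ 4 * v₂ ^ 2 + v₂ ^ 4 + v₁ ^ 2 - v₁ ^ 2 * v₂ ^ 3 - v₁ * v₂ ^ 2 - v₁ ^ 3 * v₂),
         (v₁ * v₂ ^ 4 + v₁ * v₂ + v₁ ^ 4 * v₂ - 3 * (v₁ ^ 2 * v₂ ^ 2)) /
           (v₁ ^ 4 * v₂ ^ 2 + v₂ ^ 4 + v₁ ^ 2 - v₁ ^ 2 * v₂ ^ 3 - v₁ * v₂ ^ 2 - v₁ ^ 3 * v₂)} := by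
  show c (X₁ v₁ v₂) = X₁ v₁ v₂ ∧ c (X₂ v₁ v₂) = X₂ v₁ v₂ ∧
    fixedField (Subgroup.zpowers c) = adjoin k {X₁ v₁ v₂, X₂ v₁ v₂}
  have hv₂ : v₂ ≠ 0 := h2 ▸ algebraMap_ne_zero_of_aeval_ne_zero (fun _ => 1) (by simp)
  have hfix₁ : c (X₁ v₁ v₂) = X₁ v₁ v₂ := map_X₁_eq_self hv₂ hc1 hc2
  have hfix₂ : c (X₂ v₁ v₂) = X₂ v₁ v₂ := map_X₂_eq_self hv₂ hc1 hc2
  refine ⟨hfix₁, hfix₂, ?_⟩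
  set E := adjoin k {X₁ v₁ v₂, X₂ v₁ v₂}
  have hx : X₁ v₁ v₂ ∈ E := subset_adjoin k _ (Set.mem_insert _ _)
  have hy : X₂ v₁ v₂ ∈ E := subset_adjoin k _ (Set.mem_insert_of_mem _ rfl)
  have hE : E ≤ fixedField (Subgroup.zpowers c) := by
    rw [adjoin_le_iff, Set.insert_subset_iff, Set.singleton_subset_iff]
    exact ⟨mem_fixedField_zpowers_iff.2 hfix₁, mem_fixedField_zpowers_iff.2 hfix₂⟩
  have hcard : Nat.card (Subgroup.zpowers c) = 3 := by rw [Nat.card_zpowers, hord]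
  have : Finite (Subgroup.zpowers c) := Nat.finite_of_card_ne_zero (by omega)
  have hD := den_ne_zero h1 h2
  refine (eq_fixedField_of_adjoin_simple_eq_top hE (adjoin_X₁_X₂_adjoin_simple_eq_top h1 h2)
    (cubic_ne_zero (x := (⟨_, hx⟩ : E)) (y := ⟨_, hy⟩) ?_ ?_) ?_ ?_).symm
  · exact Subtype.coe_ne_coe.1 (div_ne_zero (num₁_ne_zero h1 h2) hD)
  · exact Subtype.coe_ne_coe.1 (div_ne_zero (num₂_ne_zero h1 h2) hD)
  · simpa [Polynomial.aeval_def, Polynomial.eval₂_eq_eval_map, cubic] using eval_cubic_X₁_X₂ hD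
  · exact hcard ▸ natDegree_cubic_le _ _
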